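/- arXiv:2003.00604 — 3 statements merged into one kernel-verified Lean document; each statement's English description precedes it below -/
import Mathlib

section
/- A polynomial P in the polynomial ring E[u,z] satisfies σ₁(P) = P if and only if P lies in the E-subalgebra generated by w and z; that is, the fixed subalgebra of σ₁ equals Algebra.adjoin E {w, z}. -/
/-!
Conjugating by the shift `u ↦ u + z`, `σ₁` becomes the diagonal map `u ↦ ω̄ u`, `z ↦ z`.
Since `ω̄` is a primitive cube root of unity, a polynomial is fixed by the diagonal map iff
every monomial occurring in it has `u`-degree divisible by 3, i.e. that fixed subalgebra is
`E[u³, z]`. The shift sends `u³` to `(u + z)³ = 3w + z³`, so the fixed subalgebra of `σ₁` is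
`E[3w + z³, z] = E[w, z]`.
-/

open MvPolynomial

noncomputable section

/-- The field `E = ℚ(ω)`. -/
abbrev E : Type := CyclotomicField 3 ℚ

/-- The variable `u` in `E[u,z]`. -/
abbrev u : MvPolynomial (Fin 2) E := X 0

/-- The variable `z` in `E[u,z]`. -/
abbrev z : MvPolynomial (Fin 2) E := X 1

/-- The `E`-algebra endomorphism `σ₁` of `E[u,z]` with
`σ₁(u) = ω̄·u + (ω̄−1)·z` and `σ₁(z) = z`, where `ω̄ = ω²`. -/
def σ₁ (ω : E) : MvPolynomial (Fin 2) E →ₐ[E] MvPolynomial (Fin 2) E :=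
  aeval ![C (ω ^ 2) * u + C (ω ^ 2 - 1) * z, z]

/-- `w = u³/3 + u²z + uz²`. -/
def w : MvPolynomial (Fin 2) E := C ((3 : E)⁻¹) * u ^ 3 + u ^ 2 * z + u * z ^ 2

theorem AlgHom.equalizer_conj_id {R A B : Type*} [CommSemiring R] [Semiring A] [Algebra R A]
    [Semiring B] [Algebra R B] (e : A ≃ₐ[R] B) (f : A →ₐ[R] A) :
    equalizer ((e : A →ₐ[R] B).comp (f.comp e.symm)) (AlgHom.id R B) =
      (equalizer f (AlgHom.id R A)).map (e : A →ₐ[R] B) := by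
  ext x
  simp only [mem_equalizer, Subalgebra.mem_map, comp_apply, AlgEquiv.coe_toAlgHom, coe_id, id_eq]
  constructor
  · intro hx
    exact ⟨e.symm x, e.eq_symm_apply.mpr hx, e.apply_symm_apply x⟩
  · rintro ⟨y, hy, rfl⟩
    rw [e.symm_apply_apply, hy]

theorem Algebra.adjoin_smul_add_pow_pair {K A : Type*} [Field K] [Ring A] [Algebra K A]
    {c : K} (hc : c ≠ 0) (x y : A) (n : ℕ) :
    adjoin K {c • x + y ^ n, y} = adjoin K {x, y} := by
  have hy : y ∈ adjoin K {c • x + y ^ n, y} := subset_adjoin (by simp)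
  have hy' : y ∈ adjoin K {x, y} := subset_adjoin (by simp)
  refine le_antisymm (adjoin_le (Set.pair_subset ?_ hy')) (adjoin_le (Set.pair_subset ?_ hy))
  · exact add_mem (Subalgebra.smul_mem _ (subset_adjoin (by simp)) c) (pow_mem hy' n)
  · have hx : c⁻¹ • ((c • x + y ^ n) - y ^ n) ∈ adjoin K {c • x + y ^ n, y} :=
      Subalgebra.smul_mem _ (sub_mem (subset_adjoin (by simp)) (pow_mem hy n)) _
    rwa [add_sub_cancel_right, inv_smul_smul₀ hc] at hx

namespace MvPolynomial

section Shift

variable (R : Type*) [CommRing R]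

def shiftFirst : MvPolynomial (Fin 2) R ≃ₐ[R] MvPolynomial (Fin 2) R :=
  AlgEquiv.ofAlgHom (aeval ![X 0 + X 1, X 1]) (aeval ![X 0 - X 1, X 1])
    (algHom_ext fun i => by fin_cases i <;> simp)
    (algHom_ext fun i => by fin_cases i <;> simp)

variable {R}

@[simp]
theorem shiftFirst_X_zero : shiftFirst R (X 0) = X 0 + X 1 := by simp [shiftFirst]

@[simp]
theorem shiftFirst_X_one : shiftFirst R (X 1) = X 1 := by simp [shiftFirst]

end Shift

section Scale

variable {R : Type*} [CommSemiring R]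

def scaleFirst (ζ : R) : MvPolynomial (Fin 2) R →ₐ[R] MvPolynomial (Fin 2) R :=
  aeval ![C ζ * X 0, X 1]

theorem scaleFirst_monomial (ζ : R) (d : Fin 2 →₀ ℕ) (c : R) :
    scaleFirst ζ (monomial d c) = monomial d (ζ ^ d 0 * c) := by
  simp only [monomial_fin_two, scaleFirst, map_mul, map_pow, aeval_X, aeval_C, algebraMap_eq,
    Matrix.cons_val_zero, Matrix.cons_val_one]
  ring

theorem coeff_scaleFirst (ζ : R) (p : MvPolynomial (Fin 2) R) (d : Fin 2 →₀ ℕ) :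
    coeff d (scaleFirst ζ p) = ζ ^ d 0 * coeff d p := by
  induction p using MvPolynomial.induction_on' with
  | monomial e c =>
    rw [scaleFirst_monomial, coeff_monomial, coeff_monomial]
    split_ifs with h
    · rw [h]
    · rw [mul_zero]
  | add p q hp hq => rw [map_add, coeff_add, coeff_add, hp, hq, mul_add]

theorem equalizer_scaleFirst [IsDomain R] {ζ : R} {n : ℕ} (hζ : IsPrimitiveRoot ζ n) :
    AlgHom.equalizer (scaleFirst ζ) (AlgHom.id R _) = Algebra.adjoin R {X 0 ^ n, X 1} := by
  apply le_antisymm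
  · intro p hp
    rw [p.as_sum]
    refine Subalgebra.sum_mem _ fun d hd => ?_
    have hfix : ζ ^ d 0 * coeff d p = coeff d p := by
      rw [← coeff_scaleFirst, (AlgHom.mem_equalizer _ _ _).mp hp, AlgHom.id_apply]
    obtain ⟨k, hk⟩ : n ∣ d 0 :=
      hζ.pow_eq_one_iff_dvd _ |>.mp (mul_eq_right₀ (mem_support_iff.mp hd) |>.mp hfix)
    rw [monomial_fin_two, hk, pow_mul]
    exact mul_mem (mul_mem (Subalgebra.algebraMap_mem _ _)
      (pow_mem (Algebra.subset_adjoin (by simp)) k)) (pow_mem (Algebra.subset_adjoin (by simp)) _)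
  · refine Algebra.adjoin_le (Set.pair_subset ?_ (by simp [scaleFirst]))
    simp [scaleFirst, mul_pow, ← C_pow, hζ.pow_eq_one]

end Scale

end MvPolynomial

theorem σ₁_eq_conj (ω : E) : σ₁ ω =
    (shiftFirst E : _ →ₐ[E] _).comp ((scaleFirst (ω ^ 2)).comp (shiftFirst E).symm) :=
  algHom_ext fun i => by
    fin_cases i
    · simp [σ₁, scaleFirst, shiftFirst]
      ring
    · simp [σ₁, scaleFirst, shiftFirst]

theorem u_add_z_pow_three : (u + z) ^ 3 = (3 : E) • w + z ^ 3 := by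
  have h : 3 * C (3 : E)⁻¹ = (1 : MvPolynomial (Fin 2) E) := by
    rw [← map_ofNat C 3, ← C_mul, mul_inv_cancel₀ three_ne_zero, C_1]
  rw [smul_eq_C_mul, map_ofNat C 3, w]
  linear_combination (-u ^ 3) * h

/-- a polynomial `P ∈ E[u,z]` satisfies `σ₁(P) = P` iff `P` lies in the
`E`-subalgebra generated by `w` and `z`. -/
theorem stmt_1 (ω : E) (hω : IsPrimitiveRoot ω 3) (P : MvPolynomial (Fin 2) E) :
    σ₁ ω P = P ↔ P ∈ Algebra.adjoin E ({w, z} : Set (MvPolynomial (Fin 2) E)) := by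
  have hω2 : IsPrimitiveRoot (ω ^ 2) 3 := hω.pow_of_coprime 2 (by norm_num)
  have hfix : AlgHom.equalizer (σ₁ ω) (AlgHom.id E _) = Algebra.adjoin E {w, z} := by
    rw [σ₁_eq_conj, AlgHom.equalizer_conj_id, equalizer_scaleFirst hω2, AlgHom.map_adjoin,
      Set.image_pair]
    simp only [AlgEquiv.coe_toAlgHom, map_pow, shiftFirst_X_zero, shiftFirst_X_one]
    rw [u_add_z_pow_three, Algebra.adjoin_smul_add_pow_pair three_ne_zero]
  exact SetLike.ext_iff.mp hfix P

end
end

section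
/- In the polynomial ring ℚ[a,b,x] in three variables, the polynomial 3x⁴ + 6ax² + 12bx − a² divides the polynomial 576·(x³ + ax + b)·(6ax³ − 9bx² + 10a²x + 9ab)² − 3x·Δ(a,b)², where Δ(a,b) := 16(−4a³ − 27b²). (This expresses that on the 3-division locus of the elliptic curve y² = x³+ax+b, the element z := −24yΔ⁻¹(10a²x + 9ab + 6ax³ − 9bx²) satisfies z² = 3x.) -/
open MvPolynomial

noncomputable section

/-- The indeterminate `a` in `ℚ[a,b,x]`. -/
abbrev a : MvPolynomial (Fin 3) ℚ := X 0

/-- The indeterminate `b` in `ℚ[a,b,x]`. -/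
abbrev b : MvPolynomial (Fin 3) ℚ := X 1

/-- The indeterminate `x` in `ℚ[a,b,x]`. -/
abbrev x : MvPolynomial (Fin 3) ℚ := X 2

/-- `Δ(a,b) = 16(−4a³ − 27b²)`. -/
def Δ : MvPolynomial (Fin 3) ℚ := 16 * (-4 * a ^ 3 - 27 * b ^ 2)

/-- The cofactor is the quotient of the division by `3x⁴ + 6ax² + 12bx − a²` as polynomials in
`x`; the remainder vanishes identically. -/
theorem threeDivisionPolynomial_mul_cofactor {R : Type*} [CommRing R] (a b x : R) :
    (3 * x ^ 4 + 6 * a * x ^ 2 + 12 * b * x - a ^ 2) *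
        (192 * (36 * a ^ 2 * x ^ 5 - 108 * a * b * x ^ 4 + (84 * a ^ 3 + 81 * b ^ 2) * x ^ 3
          - 72 * a ^ 2 * b * x ^ 2 + (64 * a ^ 4 + 81 * a * b ^ 2) * x - 243 * b ^ 3)) =
      576 * (x ^ 3 + a * x + b) *
          (6 * a * x ^ 3 - 9 * b * x ^ 2 + 10 * a ^ 2 * x + 9 * a * b) ^ 2
        - 3 * x * (16 * (-4 * a ^ 3 - 27 * b ^ 2)) ^ 2 := by
  ring

/-- in `ℚ[a,b,x]`, the 3-division polynomial `3x⁴ + 6ax² + 12bx − a²` divides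
`576·(x³ + ax + b)·(6ax³ − 9bx² + 10a²x + 9ab)² − 3x·Δ(a,b)²`. -/
theorem stmt_3 :
    (3 * x ^ 4 + 6 * a * x ^ 2 + 12 * b * x - a ^ 2) ∣
      (576 * (x ^ 3 + a * x + b) *
          (6 * a * x ^ 3 - 9 * b * x ^ 2 + 10 * a ^ 2 * x + 9 * a * b) ^ 2
        - 3 * x * Δ ^ 2) :=
  Dvd.intro _ (threeDivisionPolynomial_mul_cofactor a b x)

end
end

section
/- Let k be an algebraically closed field of characteristic zero and let a, b ∈ k. Write F(a,b,Z) := Z⁸ + 18aZ⁴ + 108bZ² − 27a², and let z₁, …, z₈ ∈ k be its roots with multiplicity, so F(a,b,Z) = ∏_{i=1}^{8}(Z − zᵢ). Then the discriminant of F satisfies ∏_{1 ≤ i < j ≤ 8} (zᵢ − zⱼ)² = −2²⁴·3²¹·a²·(4a³ + 27b²)⁴. (Equivalently, disc F(a,b,·) = −2⁸·3²¹·a²·Δ⁴ with Δ = 16(−4a³−27b²).) -/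
/-!
For the monic `F` with roots `zᵢ`, the discriminant `∏_{i<j} (zᵢ - zⱼ)²` equals
`(-1)^(8 choose 2) ∏ᵢ F'(zᵢ) = ∏ᵢ F'(zᵢ)`, and `F'(z) = 8 z q(z²)` with `q(w) = w³ + 9aw + 27b`.
Here `∏ᵢ zᵢ = F(0) = -27a²`. Since `F(Z) = g(Z²)` with `g(w) = w⁴ + 18aw² + 108bw - 27a²`,
for every `w` we get `∏ᵢ (zᵢ² - w) = F(c) F(-c) = g(w)²` where `c² = w`. Factoring
`q(w) = (w - r₁)(w - r₂)(w - r₃)` with `r₃ = -(r₁ + r₂)` therefore gives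
`∏ᵢ q(zᵢ²) = (g(r₁) g(r₂) g(r₃))²`, and `g(r₁) g(r₂) g(r₃) = -3⁹ (4a³ + 27b²)²` is a polynomial
identity in `r₁, r₂` after substituting `9a = -(r₁² + r₁r₂ + r₂²)` and `27b = r₁r₂(r₁ + r₂)`.
-/

open Polynomial Finset

section Discriminant

variable {ι : Type*} [Fintype ι]

theorem prod_prod_erase_eq_prod_filter_lt [LinearOrder ι] {M : Type*} [CommMonoid M]
    (f : ι → ι → M) :
    ∏ i, ∏ j ∈ univ.erase i, f i j =
      ∏ p ∈ univ.filter (fun p : ι × ι => p.1 < p.2), f p.1 p.2 * f p.2 p.1 := by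
  calc ∏ i, ∏ j ∈ univ.erase i, f i j = ∏ p : ι × ι, if p.1 ≠ p.2 then f p.1 p.2 else 1 := by
        simp_rw [← filter_ne, prod_filter]
        exact (Fintype.prod_prod_type' _).symm
    _ = (∏ p : ι × ι, if p.1 < p.2 then f p.1 p.2 else 1) *
          ∏ p : ι × ι, if p.2 < p.1 then f p.1 p.2 else 1 := by
        rw [← prod_mul_distrib]
        refine Fintype.prod_congr _ _ fun p => ?_
        rcases lt_trichotomy p.1 p.2 with h | h | h
        · simp [h, h.ne, h.not_gt]
        · simp [h]
        · simp [h, h.ne', h.not_gt]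
    _ = _ := by
        rw [prod_mul_distrib, prod_filter, prod_filter]
        exact congrArg _ (Fintype.prod_equiv (Equiv.prodComm ι ι) _ _ fun _ => rfl)

variable {R : Type*} [CommRing R]

theorem prod_filter_lt_sub_sq [LinearOrder ι] (z : ι → R) :
    ∏ p ∈ univ.filter (fun p : ι × ι => p.1 < p.2), (z p.1 - z p.2) ^ 2 =
      (-1) ^ (Fintype.card ι).choose 2 * ∏ i, ∏ j ∈ univ.erase i, (z i - z j) := by
  have hcard : #(univ.filter fun p : ι × ι => p.1 < p.2) = (Fintype.card ι).choose 2 := by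
    rw [← univ_product_univ, card_product_filter_lt, card_univ]
  rw [prod_prod_erase_eq_prod_filter_lt, ← hcard, ← prod_const, ← prod_mul_distrib]
  exact prod_congr rfl fun p _ => by ring

theorem eval_derivative_prod_X_sub_C [DecidableEq ι] (z : ι → R) (i : ι) :
    (derivative (∏ j, (X - C (z j)))).eval (z i) = ∏ j ∈ univ.erase i, (z i - z j) := by
  rw [derivative_prod_finset, eval_finsetSum, sum_eq_single i]
  · simp [eval_prod]
  · intro j _ hji
    simp only [eval_mul, eval_prod, eval_sub, eval_X, eval_C]
    rw [prod_eq_zero (mem_erase.2 ⟨Ne.symm hji, mem_univ i⟩) (sub_self _), zero_mul]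
  · simp

end Discriminant

section CubicResolvent

variable {k : Type*} [Field k]

theorem exists_roots_depressed_cubic [IsAlgClosed k] (p q : k) :
    ∃ r₁ r₂ : k, p = -(r₁ ^ 2 + r₁ * r₂ + r₂ ^ 2) ∧ q = r₁ * r₂ * (r₁ + r₂) := by
  obtain ⟨r₁, h₁⟩ := IsAlgClosed.exists_root (X ^ 3 + C p * X + C q)
    ((by compute_degree! : _ = (3 : WithBot ℕ)).trans_ne (by decide))
  obtain ⟨r₂, h₂⟩ := IsAlgClosed.exists_root (X ^ 2 + C r₁ * X + C (r₁ ^ 2 + p))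
    ((by compute_degree! : _ = (2 : WithBot ℕ)).trans_ne (by decide))
  simp only [IsRoot, eval_add, eval_mul, eval_pow, eval_X, eval_C] at h₁ h₂
  exact ⟨r₁, r₂, by linear_combination h₂, by linear_combination h₁ - r₁ * h₂⟩

theorem quartic_eval_prod_cubic_roots [CharZero k] {a b r₁ r₂ : k}
    (ha : 9 * a = -(r₁ ^ 2 + r₁ * r₂ + r₂ ^ 2)) (hb : 27 * b = r₁ * r₂ * (r₁ + r₂)) :
    (r₁ ^ 4 + 18 * a * r₁ ^ 2 + 108 * b * r₁ - 27 * a ^ 2) *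
      (r₂ ^ 4 + 18 * a * r₂ ^ 2 + 108 * b * r₂ - 27 * a ^ 2) *
      ((-(r₁ + r₂)) ^ 4 + 18 * a * (-(r₁ + r₂)) ^ 2 + 108 * b * -(r₁ + r₂) - 27 * a ^ 2) =
      -3 ^ 9 * (4 * a ^ 3 + 27 * b ^ 2) ^ 2 := by
  obtain rfl : a = -(r₁ ^ 2 + r₁ * r₂ + r₂ ^ 2) / 9 := by linear_combination ha / 9
  obtain rfl : b = r₁ * r₂ * (r₁ + r₂) / 27 := by linear_combination hb / 27
  ring

end CubicResolvent

section DivisionPolynomial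

variable {k : Type*} [Field k] {a b : k} {z : Fin 8 → k}

theorem prod_roots_eq
    (hF : ∀ c, ∏ i, (c - z i) = c ^ 8 + 18 * a * c ^ 4 + 108 * b * c ^ 2 - 27 * a ^ 2) :
    ∏ i, z i = -27 * a ^ 2 := by
  have h := hF 0
  simp only [zero_sub, prod_neg, card_univ, Fintype.card_fin] at h
  linear_combination h

theorem prod_sq_sub_eq [IsAlgClosed k]
    (hF : ∀ c, ∏ i, (c - z i) = c ^ 8 + 18 * a * c ^ 4 + 108 * b * c ^ 2 - 27 * a ^ 2) (w : k) :
    ∏ i, (z i ^ 2 - w) = (w ^ 4 + 18 * a * w ^ 2 + 108 * b * w - 27 * a ^ 2) ^ 2 := by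
  obtain ⟨c, rfl⟩ := IsAlgClosed.exists_pow_nat_eq w two_pos
  calc ∏ i, (z i ^ 2 - c ^ 2) = (∏ i, (c - z i)) * ∏ i, (-c - z i) := by
        rw [← prod_mul_distrib]
        exact prod_congr rfl fun i _ => by ring
    _ = _ := by rw [hF, hF]; ring

theorem prod_cubic_eval_sq [IsAlgClosed k] [CharZero k]
    (hF : ∀ c, ∏ i, (c - z i) = c ^ 8 + 18 * a * c ^ 4 + 108 * b * c ^ 2 - 27 * a ^ 2) :
    ∏ i, ((z i ^ 2) ^ 3 + 9 * a * z i ^ 2 + 27 * b) = 3 ^ 18 * (4 * a ^ 3 + 27 * b ^ 2) ^ 4 := by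
  obtain ⟨r₁, r₂, ha, hb⟩ := exists_roots_depressed_cubic (9 * a) (27 * b)
  have hsplit : ∀ w, w ^ 3 + 9 * a * w + 27 * b = (w - r₁) * (w - r₂) * (w - -(r₁ + r₂)) := by
    intro w
    rw [ha, hb]
    ring
  simp_rw [hsplit, prod_mul_distrib, prod_sq_sub_eq hF]
  rw [← mul_pow, ← mul_pow, quartic_eval_prod_cubic_roots ha hb]
  ring

end DivisionPolynomial

/-- let `k` be an algebraically closed field of characteristic zero, `a b : k`,
and let `z₁, …, z₈` be the roots with multiplicity of
`F(a,b,Z) = Z⁸ + 18aZ⁴ + 108bZ² − 27a²`.  Then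
`∏_{i<j} (zᵢ − zⱼ)² = −2²⁴·3²¹·a²·(4a³ + 27b²)⁴`. -/
theorem stmt_5 (k : Type*) [Field k] [IsAlgClosed k] [CharZero k] (a b : k) (z : Fin 8 → k)
    (hz : (X ^ 8 + C (18 * a) * X ^ 4 + C (108 * b) * X ^ 2 - C (27 * a ^ 2) : k[X]) =
      ∏ i, (X - C (z i))) :
    ∏ p ∈ Finset.univ.filter (fun p : Fin 8 × Fin 8 => p.1 < p.2), (z p.1 - z p.2) ^ 2 =
      -2 ^ 24 * 3 ^ 21 * a ^ 2 * (4 * a ^ 3 + 27 * b ^ 2) ^ 4 := by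
  have hF : ∀ c, ∏ i, (c - z i) = c ^ 8 + 18 * a * c ^ 4 + 108 * b * c ^ 2 - 27 * a ^ 2 :=
    fun c => by simpa [eval_prod] using congrArg (eval c) hz.symm
  have hderiv : ∀ i, ∏ j ∈ univ.erase i, (z i - z j) =
      8 * z i * ((z i ^ 2) ^ 3 + 9 * a * z i ^ 2 + 27 * b) := fun i => by
    rw [← eval_derivative_prod_X_sub_C, ← hz]
    simp only [map_mul, map_pow, derivative_sub, derivative_add, derivative_pow, Nat.cast_ofNat,
      Nat.add_one_sub_one, derivative_X, mul_one, derivative_mul, derivative_C, zero_mul, mul_zero,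
      add_zero, zero_add, pow_one, sub_zero, eval_add, eval_mul, eval_C, eval_pow, eval_X]
    ring
  rw [prod_filter_lt_sub_sq, Fintype.card_fin, show Nat.choose 8 2 = 28 from rfl]
  simp_rw [hderiv, prod_mul_distrib, prod_const, prod_roots_eq hF, prod_cubic_eval_sq hF,
    card_univ, Fintype.card_fin]
  ring
end
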